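/- Suppose y₁, …, yₙ ∈ V ∖ {0} are such that the eR-module e·V is free with base e·y₁, …, e·yₙ. Let y ∈ e·V ∖ {0}, write y = Σᵢ λᵢ·(e·yᵢ) with λᵢ ∈ eR, and set q_QL(y) := Σᵢ λᵢ²·q(yᵢ), Y := ray(y), Yᵢ := ray(yᵢ). Then for every ray W in V: CS(W, Y) ≤ e·q_QL(y)·q(y)⁻¹ · max_{1≤i≤n} CS(W, Yᵢ). -/
import Mathlib


namespace SupertropicalCS

/-- The ray of a vector `x` in an `R`-module `V`: the set of all nonzero vectors `y`
with `lam • x = mu • y` for some nonzero scalars `lam`, `mu`. -/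
def ray (R : Type*) {V : Type*} [CommSemiring R] [AddCommMonoid V] [Module R V]
    (x : V) : Set V :=
  {y | y ≠ 0 ∧ ∃ lam mu : R, lam ≠ 0 ∧ mu ≠ 0 ∧ lam • x = mu • y}

/-- The set of all rays in `V` (the ray space `Ray(V)`). -/
def Rays (R V : Type*) [CommSemiring R] [AddCommMonoid V] [Module R V] : Set (Set V) :=
  {S | ∃ x : V, x ≠ 0 ∧ S = ray R x}

/-- The closed interval `[ray x, ray y]` in the ray space: all rays
`ray (lam • x + mu • y)` with `lam, mu ∈ R` and `lam • x + mu • y ≠ 0`. -/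
def rayInterval (R : Type*) {V : Type*} [CommSemiring R] [AddCommMonoid V] [Module R V]
    (x y : V) : Set (Set V) :=
  {S | ∃ lam mu : R, lam • x + mu • y ≠ 0 ∧ S = ray R (lam • x + mu • y)}

/-- The open interval `]ray x, ray y[` in the ray space: all rays
`ray (lam • x + mu • y)` with `lam, mu ∈ R ∖ {0}`. -/
def rayOpenInterval (R : Type*) {V : Type*} [CommSemiring R] [AddCommMonoid V] [Module R V]
    (x y : V) : Set (Set V) :=
  {S | ∃ lam mu : R, lam ≠ 0 ∧ mu ≠ 0 ∧ lam • x + mu • y ≠ 0 ∧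
    S = ray R (lam • x + mu • y)}

/-- The half-open interval `[ray x, ray y[` in the ray space: all rays
`ray (lam • x + mu • y)` with `lam ∈ R ∖ {0}` and `mu ∈ R`. -/
def rayHalfOpenInterval (R : Type*) {V : Type*} [CommSemiring R] [AddCommMonoid V] [Module R V]
    (x y : V) : Set (Set V) :=
  {S | ∃ lam mu : R, lam ≠ 0 ∧ lam • x + mu • y ≠ 0 ∧ S = ray R (lam • x + mu • y)}

/-- A set of rays is convex if together with any two of its members it contains the
closed interval between them. -/
def RayConvex (R : Type*) {V : Type*} [CommSemiring R] [AddCommMonoid V] [Module R V]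
    (A : Set (Set V)) : Prop :=
  ∀ x y : V, x ≠ 0 → y ≠ 0 → ray R x ∈ A → ray R y ∈ A → rayInterval R x y ⊆ A

/-- The convex hull of a set of rays: the smallest convex set of rays containing it. -/
def rayConvHull (R : Type*) {V : Type*} [CommSemiring R] [AddCommMonoid V] [Module R V]
    (S : Set (Set V)) : Set (Set V) :=
  ⋂₀ {A : Set (Set V) | S ⊆ A ∧ RayConvex R A}

/-- The ordering `a ≤ b ⟺ a + b = b` (a total order on the ghost ideal `eR`). -/
def rle {R : Type*} [Add R] (a b : R) : Prop := a + b = b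

/-- The strict ordering associated to `rle`. -/
def rlt {R : Type*} [Add R] (a b : R) : Prop := rle a b ∧ a ≠ b

/-- The trilinear map `m(w,x,y) = b(w,y) • x + b(w,x) • y` defining medians. -/
def med {R V : Type*} [CommSemiring R] [AddCommMonoid V] [Module R V]
    (b : V → V → R) (w x y : V) : V :=
  b w y • x + b w x • y

/-- The polar `C^⊥` of a set `C` of rays: all rays `W` such that `b(w,x) = 0`
for every `w ∈ W` and every nonzero `x` with `ray x ∈ C`. -/
def polar (R : Type*) {V : Type*} [CommSemiring R] [AddCommMonoid V] [Module R V]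
    (b : V → V → R) (C : Set (Set V)) : Set (Set V) :=
  {W | W ∈ Rays R V ∧ ∀ w ∈ W, ∀ x : V, x ≠ 0 → ray R x ∈ C → b w x = 0}

/-- The CS-ratio `CS(x,y) = e · b(x,y)² · (q(x)·q(y))⁻¹`, the inverse being taken in the
semifield `eR` (so `inv` is a function with `e * a * inv a = e` for `a ≠ 0`). -/
def CS {R V : Type*} [CommSemiring R] (e : R) (inv : R → R)
    (q : V → R) (b : V → V → R) (x y : V) : R :=
  e * (b x y * b x y) * inv (q x * q y)

section Aux

variable {R : Type*} [CommSemiring R]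

theorem rle_trans' {a b c : R} (h1 : rle a b) (h2 : rle b c) : rle a c := by
  unfold rle at *; rw [← h2, ← add_assoc, h1]

theorem rle_add' {a b c d : R} (h1 : rle a b) (h2 : rle c d) : rle (a + c) (b + d) := by
  unfold rle at *
  calc a + c + (b + d) = (a + b) + (c + d) := by ring
    _ = b + d := by rw [h1, h2]

theorem rle_mul' {a b : R} (c : R) (h : rle a b) : rle (a * c) (b * c) := by
  unfold rle at *; rw [← add_mul, h]

theorem sum_rle' {ι : Type*} {s : Finset ι} {f : ι → R} {S : R} (hS : S + S = S)
    (h : ∀ a ∈ s, rle (f a) S) : rle (∑ a ∈ s, f a) S := by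
  classical
  have hSS : rle (S + S) S := by unfold rle; rw [hS, hS]
  induction s using Finset.induction_on with
  | empty => simp [rle]
  | @insert a s hx ih =>
    rw [Finset.sum_insert hx]
    exact rle_trans'
      (rle_add' (h a (Finset.mem_insert_self a s))
        (ih fun b hb => h b (Finset.mem_insert_of_mem hb))) hSS

theorem term_rle_sum' {ι : Type*} {s : Finset ι} {f : ι → R} {i : ι} (hi : i ∈ s)
    (hf : f i + f i = f i) : rle (f i) (∑ a ∈ s, f a) := by
  classical
  unfold rle
  conv_lhs => rw [← Finset.add_sum_erase s f hi]
  rw [← add_assoc, hf, Finset.add_sum_erase s f hi]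

theorem amgm' (e : R) (hbip : ∀ a b : R, e * a + e * b = e * a ∨ e * a + e * b = e * b)
    {a b : R} (ha : e * a = a) (hb : e * b = b) : rle (a * b) (a * a + b * b) := by
  unfold rle
  rcases hbip a b with h | h
  · rw [ha, hb] at h
    -- h : a + b = a
    have hba' : a * b + b * b = a * b := by
      calc a * b + b * b = (a + b) * b := by ring
        _ = a * b := by rw [h]
    have haa : a * a + a * b = a * a := by
      calc a * a + a * b = a * (a + b) := by ring
        _ = a * a := by rw [h]
    have h2 : a * a + b * b = a * a := by
      calc a * a + b * b = (a * a + a * b) + b * b := by rw [haa]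
        _ = a * a + (a * b + b * b) := by ring
        _ = a * a + a * b := by rw [hba']
        _ = a * a := haa
    rw [h2]
    calc a * b + a * a = a * (a + b) := by ring
      _ = a * a := by rw [h]
  · rw [ha, hb] at h
    -- h : a + b = b
    have hab : a * a + a * b = a * b := by
      calc a * a + a * b = a * (a + b) := by ring
        _ = a * b := by rw [h]
    have hbb : a * b + b * b = b * b := by
      calc a * b + b * b = (a + b) * b := by ring
        _ = b * b := by rw [h]
    have h2 : a * a + b * b = b * b := by
      calc a * a + b * b = a * a + (a * b + b * b) := by rw [hbb]
        _ = (a * a + a * b) + b * b := by ring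
        _ = a * b + b * b := by rw [hab]
        _ = b * b := hbb
    rw [h2]
    exact hbb

theorem sq_sum_rle' {ι : Type*} (e : R) (he2 : e * e = e)
    (hbip : ∀ a b : R, e * a + e * b = e * a ∨ e * a + e * b = e * b)
    (s : Finset ι) (f : ι → R) (hg : ∀ i ∈ s, e * f i = f i) :
    rle ((∑ i ∈ s, f i) * (∑ i ∈ s, f i)) (∑ i ∈ s, f i * f i) := by
  classical
  have idem : ∀ a : R, e * a = a → a + a = a := by
    intro a ha
    have h := hbip a a
    rw [ha] at h
    rcases h with h | h <;> exact h
  have hgsq : ∀ i ∈ s, e * (f i * f i) = f i * f i := fun i hi => by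
    rw [← mul_assoc, hg i hi]
  have hgS : e * (∑ i ∈ s, f i * f i) = ∑ i ∈ s, f i * f i := by
    rw [Finset.mul_sum]
    exact Finset.sum_congr rfl hgsq
  have hSS : (∑ i ∈ s, f i * f i) + (∑ i ∈ s, f i * f i) = ∑ i ∈ s, f i * f i :=
    idem _ hgS
  rw [Finset.sum_mul_sum]
  apply sum_rle' hSS
  intro i hi
  apply sum_rle' hSS
  intro j hj
  have h1 := amgm' e hbip (hg i hi) (hg j hj)
  have h2 : rle (f i * f i + f j * f j) (∑ a ∈ s, f a * f a) := by
    have hSS' : rle ((∑ a ∈ s, f a * f a) + (∑ a ∈ s, f a * f a)) (∑ a ∈ s, f a * f a) := by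
      unfold rle; rw [hSS, hSS]
    exact rle_trans'
      (rle_add' (term_rle_sum' (f := fun a => f a * f a) hi (idem _ (hgsq i hi)))
        (term_rle_sum' (f := fun a => f a * f a) hj (idem _ (hgsq j hj)))) hSS'
  exact rle_trans' h1 h2

end Aux

/-- if `eV` is free over `eR` with base `e·y₁, …, e·yₙ` and
`y = ∑ λᵢ·(e·yᵢ)`, then `CS(W,Y) ≤ e·q_QL(y)·q(y)⁻¹ · max_i CS(W,Yᵢ)`
(the maximum in `eR` being the sum). -/
theorem statement13 {R V : Type*} [CommSemiring R] [AddCommMonoid V] [Module R V]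
    (e : R) (he : e = 1 + 1)
    (hst : ∀ a b : R, (e * a ≠ e * b → a + b = a ∨ a + b = b) ∧ (e * a = e * b → a + b = e * a))
    (hzd : ∀ a b : R, a * b = 0 → a = 0 ∨ b = 0)
    (hbip : ∀ a b : R, e * a + e * b = e * a ∨ e * a + e * b = e * b)
    (inv : R → R)
    (hinv : ∀ a : R, a ≠ 0 → e * inv a = inv a ∧ e * a * inv a = e)
    (hmod : ∀ (c : R) (x : V), c • x = 0 → c = 0 ∨ x = 0)
    (q : V → R) (bf : V → V → R)
    (hq : ∀ (a : R) (x : V), q (a • x) = a ^ 2 * q x)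
    (hba : ∀ x y z : V, bf (x + y) z = bf x z + bf y z)
    (hbs : ∀ (a : R) (x y : V), bf (a • x) y = a * bf x y)
    (hbsymm : ∀ x y : V, bf x y = bf y x)
    (hcomp : ∀ x y : V, q (x + y) = q x + q y + bf x y)
    (han : ∀ x : V, q x = 0 → x = 0)
    (n : ℕ) (y : Fin n → V) (hy : ∀ i, y i ≠ 0)
    (hfree1 : ∀ z : V, e • z = z →
        ∃ c : Fin n → R, (∀ i, e * c i = c i) ∧ z = ∑ i, c i • (e • y i))
    (hfree2 : ∀ c d : Fin n → R, (∀ i, e * c i = c i) → (∀ i, e * d i = d i) →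
        (∑ i, c i • (e • y i)) = (∑ i, d i • (e • y i)) → c = d)
    (yv : V) (hyv : yv ≠ 0) (hyvg : e • yv = yv)
    (lam : Fin n → R) (hlamg : ∀ i, e * lam i = lam i)
    (hdecomp : yv = ∑ i, lam i • (e • y i))
    (w : V) (hw : w ≠ 0) :
    rle (CS e inv q bf w yv)
      (e * (∑ i, lam i ^ 2 * q (y i)) * inv (q yv) * (∑ i, CS e inv q bf w (y i))) := by
  classical
  have hee : e + e = e := by
    have h := hbip 1 1
    rcases h with h | h <;> simpa using h
  have he2 : e * e = e := by
    have h := (hst e e).2 rfl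
    rw [← h]; exact hee
  have idem : ∀ a : R, e * a = a → a + a = a := by
    intro a ha
    have h := hbip a a
    rw [ha] at h
    rcases h with h | h <;> exact h
  have hqw : q w ≠ 0 := fun h => hw (han w h)
  have hqyv : q yv ≠ 0 := fun h => hyv (han yv h)
  have hqyi : ∀ i, q (y i) ≠ 0 := fun i h => hy i (han (y i) h)
  have hne : ∀ a b : R, a ≠ 0 → b ≠ 0 → a * b ≠ 0 := by
    intro a b ha hb h
    rcases hzd a b h with h' | h'
    · exact ha h'
    · exact hb h'
  have CSdef : ∀ u v' : V, CS e inv q bf u v' = e * (bf u v' * bf u v') * inv (q u * q v') :=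
    fun _ _ => rfl
  -- multiplicativity of inv on ghosts
  have minv : ∀ a b : R, a ≠ 0 → b ≠ 0 → e * inv (a * b) = e * (inv a * inv b) := by
    intro a b ha hb
    obtain ⟨h1, h2⟩ := hinv (a * b) (hne a b ha hb)
    obtain ⟨_, h4⟩ := hinv a ha
    obtain ⟨_, h6⟩ := hinv b hb
    have key : (e * inv (a * b)) * ((e * a * inv a) * (e * b * inv b))
        = ((e * (a * b) * inv (a * b)) * e) * (e * (inv a * inv b)) := by ring
    rw [h4, h6, h2, he2] at key
    -- key : (e * inv (a*b)) * e = e * (e * (inv a * inv b))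
    have key2 : e * (e * (inv a * inv b)) = e * (inv a * inv b) := by
      rw [← mul_assoc, he2]
    rw [key2] at key
    calc e * inv (a * b) = (e * inv (a * b)) * e := by
          conv_lhs => rw [← he2]
          ring
      _ = e * (inv a * inv b) := key
  -- bilinearity over finite sums
  have bf0 : ∀ v' : V, bf 0 v' = 0 := by
    intro v'
    have h := hbs 0 v' v'
    rw [zero_smul] at h
    rw [h, zero_mul]
  have bfsum : ∀ g : Fin n → V, bf (∑ i, g i) w = ∑ i, bf (g i) w := by
    intro g
    exact map_sum (AddMonoidHom.mk ⟨fun v' => bf v' w, bf0 w⟩ (fun x z => hba x z w)) g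
      Finset.univ
  have hβ : bf w yv = ∑ i, lam i * (e * bf w (y i)) := by
    rw [hbsymm w yv, hdecomp, bfsum]
    exact Finset.sum_congr rfl fun i _ => by rw [hbs, hbs, hbsymm (y i) w]
  -- ghostness facts
  have hga : ∀ i, e * (lam i * (e * bf w (y i))) = lam i * (e * bf w (y i)) := by
    intro i
    calc e * (lam i * (e * bf w (y i))) = (e * lam i) * (e * bf w (y i)) := by ring
      _ = lam i * (e * bf w (y i)) := by rw [hlamg i]
  have ghostQ : ∀ i, e * (lam i ^ 2 * q (y i)) = lam i ^ 2 * q (y i) := by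
    intro i
    calc e * (lam i ^ 2 * q (y i)) = (e * lam i) * (lam i * q (y i)) := by ring
      _ = lam i ^ 2 * q (y i) := by rw [hlamg i]; ring
  have ghostCS : ∀ i, e * CS e inv q bf w (y i) = CS e inv q bf w (y i) := by
    intro i
    rw [CSdef, ← mul_assoc, ← mul_assoc, he2]
  have ghostRHS :
      e * (e * (∑ i, lam i ^ 2 * q (y i)) * inv (q yv) * (∑ i, CS e inv q bf w (y i)))
        = e * (∑ i, lam i ^ 2 * q (y i)) * inv (q yv) * (∑ i, CS e inv q bf w (y i)) := by
    calc e * (e * (∑ i, lam i ^ 2 * q (y i)) * inv (q yv) * (∑ i, CS e inv q bf w (y i)))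
        = (e * e) * ((∑ i, lam i ^ 2 * q (y i)) * inv (q yv)
            * (∑ i, CS e inv q bf w (y i))) := by ring
      _ = _ := by rw [he2]; ring
  have RHSidem := idem _ ghostRHS
  -- step 1 : CS(w,yv) ≤ ∑ᵢ e·aᵢ²·inv(q(w)q(yv))
  have c1 : rle (bf w yv * bf w yv)
      (∑ i, (lam i * (e * bf w (y i))) * (lam i * (e * bf w (y i)))) := by
    rw [hβ]
    exact sq_sum_rle' e he2 hbip Finset.univ (fun i => lam i * (e * bf w (y i)))
      (fun i _ => hga i)
  have c2 : rle (CS e inv q bf w yv)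
      (∑ i, e * ((lam i * (e * bf w (y i))) * (lam i * (e * bf w (y i)))) * inv (q w * q yv)) := by
    have h := rle_mul' (e * inv (q w * q yv)) c1
    have e1 : CS e inv q bf w yv = (bf w yv * bf w yv) * (e * inv (q w * q yv)) := by
      rw [CSdef]; ring
    have e2 : (∑ i, (lam i * (e * bf w (y i))) * (lam i * (e * bf w (y i))))
          * (e * inv (q w * q yv))
        = ∑ i, e * ((lam i * (e * bf w (y i))) * (lam i * (e * bf w (y i))))
            * inv (q w * q yv) := by
      rw [Finset.sum_mul]
      exact Finset.sum_congr rfl fun i _ => by ring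
    rw [e1, ← e2]
    exact h
  -- step 2 : each term is ≤ RHS
  have keyi : ∀ i : Fin n,
      rle (e * ((lam i * (e * bf w (y i))) * (lam i * (e * bf w (y i)))) * inv (q w * q yv))
        (e * (∑ j, lam j ^ 2 * q (y j)) * inv (q yv) * (∑ j, CS e inv q bf w (y j))) := by
    intro i
    have l1 : e * ((lam i * (e * bf w (y i))) * (lam i * (e * bf w (y i)))) * inv (q w * q yv)
        = lam i ^ 2 * q (y i)
            * ((bf w (y i) * bf w (y i)) * inv (q w * q yv) * (e * inv (q (y i)))) := by
      have l1a : e * ((lam i * (e * bf w (y i))) * (lam i * (e * bf w (y i)))) * inv (q w * q yv)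
          = ((e * lam i) * (e * lam i))
              * (e * ((bf w (y i) * bf w (y i)) * inv (q w * q yv))) := by ring
      have l1b : lam i ^ 2 * q (y i)
            * ((bf w (y i) * bf w (y i)) * inv (q w * q yv) * (e * inv (q (y i))))
          = (lam i ^ 2 * (bf w (y i) * bf w (y i)) * inv (q w * q yv))
              * (e * q (y i) * inv (q (y i))) := by ring
      rw [l1a, hlamg i, l1b, (hinv (q (y i)) (hqyi i)).2]
      ring
    have l3 : rle
        (lam i ^ 2 * q (y i)
          * ((bf w (y i) * bf w (y i)) * inv (q w * q yv) * (e * inv (q (y i)))))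
        ((∑ j, lam j ^ 2 * q (y j))
          * ((bf w (y i) * bf w (y i)) * inv (q w * q yv) * (e * inv (q (y i))))) :=
      rle_mul' _ (term_rle_sum' (f := fun j => lam j ^ 2 * q (y j)) (Finset.mem_univ i) (idem _ (ghostQ i)))
    have l4 : (∑ j, lam j ^ 2 * q (y j))
          * ((bf w (y i) * bf w (y i)) * inv (q w * q yv) * (e * inv (q (y i))))
        = (e * (∑ j, lam j ^ 2 * q (y j)) * inv (q yv)) * CS e inv q bf w (y i) := by
      have l4a : (∑ j, lam j ^ 2 * q (y j))
            * ((bf w (y i) * bf w (y i)) * inv (q w * q yv) * (e * inv (q (y i))))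
          = ((∑ j, lam j ^ 2 * q (y j)) * (bf w (y i) * bf w (y i)) * inv (q (y i)))
              * (e * inv (q w * q yv)) := by ring
      have l4b : (e * (∑ j, lam j ^ 2 * q (y j)) * inv (q yv)) * CS e inv q bf w (y i)
          = ((e * (∑ j, lam j ^ 2 * q (y j)) * inv (q yv)) * (bf w (y i) * bf w (y i)))
              * (e * inv (q w * q (y i))) := by
        rw [CSdef]; ring
      rw [l4a, minv (q w) (q yv) hqw hqyv, l4b, minv (q w) (q (y i)) hqw (hqyi i)]
      calc ((∑ j, lam j ^ 2 * q (y j)) * (bf w (y i) * bf w (y i)) * inv (q (y i)))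
            * (e * (inv (q w) * inv (q yv)))
          = e * ((∑ j, lam j ^ 2 * q (y j)) * (bf w (y i) * bf w (y i))
              * (inv (q yv) * inv (q w) * inv (q (y i)))) := by ring
        _ = (e * e) * ((∑ j, lam j ^ 2 * q (y j)) * (bf w (y i) * bf w (y i))
              * (inv (q yv) * inv (q w) * inv (q (y i)))) := by rw [he2]
        _ = ((e * (∑ j, lam j ^ 2 * q (y j)) * inv (q yv)) * (bf w (y i) * bf w (y i)))
              * (e * (inv (q w) * inv (q (y i)))) := by ring
    have l5 : rle (CS e inv q bf w (y i)) (∑ j, CS e inv q bf w (y j)) :=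
      term_rle_sum' (f := fun j => CS e inv q bf w (y j)) (Finset.mem_univ i) (idem _ (ghostCS i))
    have l6 : rle ((e * (∑ j, lam j ^ 2 * q (y j)) * inv (q yv)) * CS e inv q bf w (y i))
        ((e * (∑ j, lam j ^ 2 * q (y j)) * inv (q yv)) * (∑ j, CS e inv q bf w (y j))) := by
      have h := rle_mul' (e * (∑ j, lam j ^ 2 * q (y j)) * inv (q yv)) l5
      rw [mul_comm (CS e inv q bf w (y i)),
        mul_comm (∑ j, CS e inv q bf w (y j))] at h
      exact h
    rw [l1]
    exact rle_trans' l3 (by rw [l4]; exact l6)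
  exact rle_trans' c2 (sum_rle' RHSidem (fun i _ => keyi i))

end SupertropicalCS
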